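/- arXiv:2210.10562 — 3 statements merged into one kernel-verified Lean document; each statement's English description precedes it below -/
import Mathlib

section
/- Let q be a prime power, n a positive integer, and α₁, …, αₙ distinct elements of F_{q^2} all lying in a set S = {α : α^q = aα + b} for some fixed a ∈ F_{q^2}^*, b ∈ F_{q^2}. Define u_i = ∏_{j ≠ i} (α_i − α_j)^{-1}. Then u_i^q = a^{-(n-1)} u_i for every i. -/
/-! Since `q ∣ q² = |F|`, `q` is a power of the characteristic, so `x ↦ x^q` is additive.
Hence every factor `α_i - α_j` satisfies `(α_i - α_j)^q = a (α_i - α_j)`, and the product of the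
`n - 1` factors gets multiplied by `a^(n-1)`; inverting gives the claim. -/

theorem FiniteField.exists_eq_ringChar_pow_of_dvd_card {F : Type*} [Field F] [Fintype F] {q : ℕ}
    (hq : q ∣ Fintype.card F) : ∃ k, q = ringChar F ^ k := by
  obtain ⟨m, -, hm⟩ := FiniteField.card F (ringChar F)
  rw [hm] at hq
  obtain ⟨k, -, rfl⟩ := (Nat.dvd_prime_pow (CharP.char_is_prime F (ringChar F))).1 hq
  exact ⟨k, rfl⟩

theorem FiniteField.sub_pow_of_dvd_card {F : Type*} [Field F] [Fintype F] {q : ℕ}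
    (hq : q ∣ Fintype.card F) (x y : F) : (x - y) ^ q = x ^ q - y ^ q := by
  obtain ⟨k, rfl⟩ := FiniteField.exists_eq_ringChar_pow_of_dvd_card hq
  have : Fact (ringChar F).Prime := ⟨CharP.char_is_prime F (ringChar F)⟩
  exact sub_pow_char_pow x y k

theorem Finset.prod_pow_eq_pow_card_mul_prod {ι M : Type*} [CommMonoid M] {s : Finset ι}
    {f : ι → M} {q : ℕ} {a : M} (hf : ∀ j ∈ s, f j ^ q = a * f j) :
    (∏ j ∈ s, f j) ^ q = a ^ s.card * ∏ j ∈ s, f j := by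
  rw [← Finset.prod_pow, Finset.prod_congr rfl hf, Finset.prod_mul_distrib, Finset.prod_const]

theorem stmt_7_general {F : Type*} [Field F] [Fintype F] (q : ℕ)
    (hcard : Fintype.card F = q ^ 2) (n : ℕ) (a b : F)
    (α : Fin n → F)
    (hα : ∀ i, (α i) ^ q = a * α i + b) :
    ∀ i : Fin n,
      ((∏ j ∈ Finset.univ.erase i, (α i - α j))⁻¹) ^ q
        = (a ^ (n - 1))⁻¹ * (∏ j ∈ Finset.univ.erase i, (α i - α j))⁻¹ := by
  intro i
  have hq : q ∣ Fintype.card F := hcard ▸ Dvd.intro_left _ (sq q).symm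
  have hfactor : ∀ j ∈ Finset.univ.erase i, (α i - α j) ^ q = a * (α i - α j) := by
    intro j _
    rw [FiniteField.sub_pow_of_dvd_card hq, hα, hα]
    ring
  rw [inv_pow, Finset.prod_pow_eq_pow_card_mul_prod hfactor, mul_inv,
    Finset.card_erase_of_mem (Finset.mem_univ i), Finset.card_univ, Fintype.card_fin]

/-- If `α₁, …, αₙ` are distinct elements of `F_{q^2}` all satisfying
`α^q = aα + b` (with `a ≠ 0`), and `u_i = ∏_{j≠i} (α_i − α_j)⁻¹`, then
`u_i^q = a^{-(n-1)} u_i` for every `i`. -/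
theorem stmt_7 {F : Type*} [Field F] [Fintype F] (q : ℕ) (hq : IsPrimePow q)
    (hcard : Fintype.card F = q ^ 2) (n : ℕ) (hn : 0 < n) (a b : F) (ha : a ≠ 0)
    (α : Fin n → F) (hinj : Function.Injective α)
    (hα : ∀ i, (α i) ^ q = a * α i + b) :
    ∀ i : Fin n,
      ((∏ j ∈ Finset.univ.erase i, (α i - α j))⁻¹) ^ q
        = (a ^ (n - 1))⁻¹ * (∏ j ∈ Finset.univ.erase i, (α i - α j))⁻¹ :=
  stmt_7_general q hcard n a b α hα
end

section
/- Let q be a prime power, V the kernel of the trace on F_{q^2}, θ a primitive element of F_{q^2}, a ∈ V, and α₁,…,αₙ distinct elements of the coset aθ + V, say α_i = aθ + x_i with x_i ∈ V. Define u_i = ∏_{j≠i}(α_i − α_j)^{-1}. Then u_i^q = (−1)^{n−1} u_i for every i. In particular, if n is even then u_i^q = −u_i, and if n is odd then u_i ∈ F_q^*. -/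
/-! The differences `α_i - α_j = x_i - x_j` lie in `V`, on which the `q`-power Frobenius acts as
`-1`. Hence the Frobenius multiplies the product of the `n - 1` differences, and so `u_i`,
by `(-1)^(n-1)`. -/

open Finset

theorem sub_pow_eq_neg_of_pow_add_eq_zero {R : Type*} [CommRing R] {p : ℕ} [ExpChar R p]
    {k : ℕ} {x y : R} (hx : x ^ p ^ k + x = 0) (hy : y ^ p ^ k + y = 0) :
    (x - y) ^ p ^ k = -(x - y) := by
  rw [sub_pow_expChar_pow, eq_neg_of_add_eq_zero_left hx, eq_neg_of_add_eq_zero_left hy]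
  ring

theorem prod_pow_eq_neg_one_pow_card_mul {ι M : Type*} [CommMonoid M] [HasDistribNeg M]
    {s : Finset ι} {f : ι → M} {m : ℕ} (hf : ∀ j ∈ s, f j ^ m = -f j) :
    (∏ j ∈ s, f j) ^ m = (-1) ^ #s * ∏ j ∈ s, f j := by
  rw [← prod_pow, prod_congr rfl fun j hj => (hf j hj).trans (neg_one_mul (f j)).symm,
    prod_mul_distrib, prod_const]

theorem inv_pow_eq_neg_one_pow_mul {K : Type*} [Field K] {u : K} {m k : ℕ}
    (hu : u ^ m = (-1) ^ k * u) : u⁻¹ ^ m = (-1) ^ k * u⁻¹ := by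
  rw [inv_pow, hu, mul_inv, ← inv_pow, inv_neg_one]

theorem stmt_8_general {F : Type*} [Field F] [Fintype F] (q : ℕ) (hq : IsPrimePow q)
    (hcard : Fintype.card F = q ^ 2) (θ : F)
    (n : ℕ) (a : F)
    (x : Fin n → F) (hxinj : Function.Injective x) (hx : ∀ i, (x i) ^ q + x i = 0)
    (α : Fin n → F) (hα : ∀ i, α i = a * θ + x i) :
    ∀ i : Fin n,
      ((∏ j ∈ Finset.univ.erase i, (α i - α j))⁻¹) ^ q
          = (-1 : F) ^ (n - 1) * (∏ j ∈ Finset.univ.erase i, (α i - α j))⁻¹ ∧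
      (Even n →
        ((∏ j ∈ Finset.univ.erase i, (α i - α j))⁻¹) ^ q
          = -(∏ j ∈ Finset.univ.erase i, (α i - α j))⁻¹) ∧
      (Odd n →
        ((∏ j ∈ Finset.univ.erase i, (α i - α j))⁻¹) ^ q
          = (∏ j ∈ Finset.univ.erase i, (α i - α j))⁻¹ ∧
        (∏ j ∈ Finset.univ.erase i, (α i - α j))⁻¹ ≠ 0) := by
  obtain ⟨p, k, hp, -, rfl⟩ := hq
  have : Fact p.Prime := ⟨hp.nat_prime⟩
  have : CharP F p := charP_of_card_eq_prime_pow (hcard.trans (pow_mul p k 2).symm)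
  intro i
  have hdiff : ∀ j, α i - α j = x i - x j := fun j => by rw [hα, hα]; ring
  have hcard_erase : #(univ.erase i) = n - 1 := by simp
  have hfrob : ((∏ j ∈ univ.erase i, (α i - α j))⁻¹) ^ p ^ k
      = (-1 : F) ^ (n - 1) * (∏ j ∈ univ.erase i, (α i - α j))⁻¹ := by
    refine inv_pow_eq_neg_one_pow_mul ?_
    rw [← hcard_erase]
    exact prod_pow_eq_neg_one_pow_card_mul fun j _ => by
      rw [hdiff]; exact sub_pow_eq_neg_of_pow_add_eq_zero (hx i) (hx j)
  have hprod_ne : ∏ j ∈ univ.erase i, (α i - α j) ≠ 0 :=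
    prod_ne_zero_iff.mpr fun j hj => by
      rw [hdiff, sub_ne_zero]
      exact fun h => ne_of_mem_erase hj (hxinj h).symm
  refine ⟨hfrob, fun hn => ?_, fun hn => ⟨?_, inv_ne_zero hprod_ne⟩⟩
  · rw [hfrob, (Nat.Even.sub_odd i.pos hn odd_one).neg_one_pow, neg_one_mul]
  · rw [hfrob, (Nat.Odd.sub_odd hn odd_one).neg_one_pow, one_mul]

/-- Let `V` be the kernel of the trace, `θ` a primitive element, `a ∈ V`, and
`α_i = aθ + x_i` with `x_i ∈ V` distinct. With `u_i = ∏_{j≠i}(α_i − α_j)⁻¹`,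
one has `u_i^q = (−1)^{n−1} u_i`; in particular `u_i^q = −u_i` if `n` is even,
and `u_i ∈ F_q^*` if `n` is odd. -/
theorem stmt_8 {F : Type*} [Field F] [Fintype F] (q : ℕ) (hq : IsPrimePow q)
    (hcard : Fintype.card F = q ^ 2) (θ : F) (hθ : orderOf θ = q ^ 2 - 1)
    (n : ℕ) (a : F) (ha : a ^ q + a = 0)
    (x : Fin n → F) (hxinj : Function.Injective x) (hx : ∀ i, (x i) ^ q + x i = 0)
    (α : Fin n → F) (hα : ∀ i, α i = a * θ + x i) :
    ∀ i : Fin n,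
      ((∏ j ∈ Finset.univ.erase i, (α i - α j))⁻¹) ^ q
          = (-1 : F) ^ (n - 1) * (∏ j ∈ Finset.univ.erase i, (α i - α j))⁻¹ ∧
      (Even n →
        ((∏ j ∈ Finset.univ.erase i, (α i - α j))⁻¹) ^ q
          = -(∏ j ∈ Finset.univ.erase i, (α i - α j))⁻¹) ∧
      (Odd n →
        ((∏ j ∈ Finset.univ.erase i, (α i - α j))⁻¹) ^ q
          = (∏ j ∈ Finset.univ.erase i, (α i - α j))⁻¹ ∧
        (∏ j ∈ Finset.univ.erase i, (α i - α j))⁻¹ ≠ 0) :=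
  stmt_8_general q hq hcard θ n a x hxinj hx α hα
end

section
/- Let q be a prime power, n odd with n ≥ 2q − 1, and α₁, …, αₙ distinct nonzero elements of F_{q^2}^*. Then there do not exist x₁, …, xₙ ∈ F_q^* satisfying simultaneously: ∑_{l=1}^n α_l^{i+jq} x_l = 0 for all 0 ≤ i, j ≤ (n−1)/2 with (i,j) ≠ ((n−1)/2, (n−1)/2), and ∑_{l=1}^n α_l^{((n−1)/2)(q+1)} x_l = −1. -/
/-! Every `α` is a unit of `F`, so `α ^ (q ^ 2 - 1) = 1` and exponents only matter modulo
`q ^ 2 - 1`. With `m = (n - 1) / 2` and `s = m + 1 - q`, the exponent `m (q + 1)` of the last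
equation exceeds the exponent `s + s q` of the pair `(s, s)` by exactly `q ^ 2 - 1`; since
`n ≥ 2q - 1` and `q ≥ 2`, the pair `(s, s)` is admissible and distinct from `(m, m)`, so the two
sums coincide and `-1 = 0`. -/

lemma FiniteField.pow_add_card_sub_one {K : Type*} [GroupWithZero K] [Fintype K] {a : K}
    (ha : a ≠ 0) (e : ℕ) : a ^ (e + (Fintype.card K - 1)) = a ^ e := by
  rw [pow_add, FiniteField.pow_card_sub_one_eq_one a ha, mul_one]

lemma Fintype.two_le_of_card_eq_sq {K : Type*} [Fintype K] [Nontrivial K] {q : ℕ}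
    (h : Fintype.card K = q ^ 2) : 2 ≤ q :=
  (Nat.one_lt_pow_iff two_ne_zero).mp (h ▸ Fintype.one_lt_card)

lemma Nat.add_sub_one_mul_add_one {s q : ℕ} (hq : 1 ≤ q) :
    (s + q - 1) * (q + 1) = s + s * q + (q ^ 2 - 1) := by
  obtain ⟨r, rfl⟩ := Nat.exists_eq_add_of_le' hq
  have hsq : (r + 1) ^ 2 - 1 = r * (r + 2) := by
    rw [show (r + 1) ^ 2 = r * (r + 2) + 1 by ring, Nat.add_sub_cancel]
  rw [Nat.add_sub_assoc hq, Nat.add_sub_cancel, hsq]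
  ring

theorem stmt_14_general {F : Type*} [Field F] [Fintype F] (q : ℕ)
    (hcard : Fintype.card F = q ^ 2) (n : ℕ) (hn : 2 * q - 1 ≤ n)
    (α : Fin n → F) (hα : ∀ l, α l ≠ 0) :
    ¬ ∃ x : Fin n → F,
      (∀ l, x l ≠ 0 ∧ (x l) ^ q = x l) ∧
      (∀ i j : ℕ, i ≤ (n - 1) / 2 → j ≤ (n - 1) / 2 →
        ¬(i = (n - 1) / 2 ∧ j = (n - 1) / 2) →
        ∑ l, (α l) ^ (i + j * q) * x l = 0) ∧
      (∑ l, (α l) ^ (((n - 1) / 2) * (q + 1)) * x l = -1) := by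
  rintro ⟨x, -, hvanish, hlast⟩
  have hq : 2 ≤ q := Fintype.two_le_of_card_eq_sq hcard
  set m := (n - 1) / 2
  set s := m + 1 - q
  have hm : m = s + q - 1 := by omega
  have hshift (l : Fin n) : α l ^ (m * (q + 1)) = α l ^ (s + s * q) := by
    rw [hm, Nat.add_sub_one_mul_add_one (by omega), ← hcard,
      FiniteField.pow_add_card_sub_one (hα l)]
  have hs := hvanish s s (by omega) (by omega) (by omega)
  simp only [hshift, hs] at hlast
  exact one_ne_zero (neg_eq_zero.mp hlast.symm)

/-- Let `n ≥ 2q − 1` be odd and `α₁,…,αₙ` distinct nonzero elements of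
`F_{q^2}^*`. There is no `x ∈ (F_q^*)^n` with `∑_l α_l^{i+jq} x_l = 0` for all
`0 ≤ i, j ≤ (n−1)/2` with `(i,j) ≠ ((n−1)/2,(n−1)/2)`, and
`∑_l α_l^{((n−1)/2)(q+1)} x_l = −1`. -/
theorem stmt_14 {F : Type*} [Field F] [Fintype F] (q : ℕ) (hq : IsPrimePow q)
    (hcard : Fintype.card F = q ^ 2) (n : ℕ) (hodd : Odd n) (hn : 2 * q - 1 ≤ n)
    (α : Fin n → F) (hinj : Function.Injective α) (hα : ∀ l, α l ≠ 0) :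
    ¬ ∃ x : Fin n → F,
      (∀ l, x l ≠ 0 ∧ (x l) ^ q = x l) ∧
      (∀ i j : ℕ, i ≤ (n - 1) / 2 → j ≤ (n - 1) / 2 →
        ¬(i = (n - 1) / 2 ∧ j = (n - 1) / 2) →
        ∑ l, (α l) ^ (i + j * q) * x l = 0) ∧
      (∑ l, (α l) ^ (((n - 1) / 2) * (q + 1)) * x l = -1) :=
  stmt_14_general q hcard n hn α hα
end
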